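/- For every m, n ∈ ℕ ∪ {0} and every w ∈ Σ_2, the dyadic odometer O and the shift σ_2 on Σ_2 satisfy the renormalization identity (O^m ∘ σ_2^n)(w) = (σ_2^n ∘ O^{m·2^n})(w). -/

import Mathlib

open scoped Classical

/-- The dyadic odometer on `Σ₂ = {0,1}^ℕ` (with `true = 1`, `false = 0`). -/
noncomputable def dyadicOdometer (w : ℕ → Bool) : ℕ → Bool :=
  if h : ∃ k, w k = false then
    fun i => if i < Nat.find h then false else if i = Nat.find h then true else w i
  else fun _ => false

/-- The shift map `σ₂` on `Σ₂`. -/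
def shiftTwo (w : ℕ → Bool) : ℕ → Bool := fun i => w (i + 1)

/-! Reading `w` as the 2-adic integer `∑ wᵢ 2ⁱ`, the odometer is `x ↦ x + 1` and the shift is
`x ↦ ⌊x / 2⌋`, so `σ₂ (x + 2) = σ₂ x + 1`, i.e. `σ₂ ∘ O² = O ∘ σ₂`; iterating this gives
`σ₂ⁿ ∘ O^{2ⁿ} = O ∘ σ₂ⁿ`. The identity `σ₂ ∘ O² = O ∘ σ₂` itself comes from the carry rule:
`σ₂ (O w)` is `O (σ₂ w)` if `w₀ = 1` and `σ₂ w` if `w₀ = 0`, and `O` flips the first digit. -/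

theorem Function.Semiconj.iterate_left_pow {α : Type*} {f g : α → α} {k : ℕ}
    (h : Function.Semiconj f g^[k] g) (n : ℕ) : Function.Semiconj f^[n] g^[k ^ n] g := by
  induction n with
  | zero => simpa using Function.Semiconj.id_left
  | succ n ih =>
    rw [Function.iterate_succ, pow_succ', Function.iterate_mul]
    exact ih.comp_left (h.iterate_right _)

lemma dyadicOdometer_of_exists {w : ℕ → Bool} (h : ∃ k, w k = false) (i : ℕ) :
    dyadicOdometer w i =
      if i < Nat.find h then false else if i = Nat.find h then true else w i := by
  rw [dyadicOdometer, dif_pos h]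

lemma dyadicOdometer_of_not_exists {w : ℕ → Bool} (h : ¬∃ k, w k = false) :
    dyadicOdometer w = fun _ => false := by
  rw [dyadicOdometer, dif_neg h]

lemma dyadicOdometer_apply_zero (w : ℕ → Bool) : dyadicOdometer w 0 = !w 0 := by
  by_cases h : ∃ k, w k = false
  · rw [dyadicOdometer_of_exists h]
    cases hw : w 0
    · simp [(Nat.find_eq_zero h).2 hw]
    · simp [(Nat.find_pos h).2 (by simp [hw])]
  · rw [dyadicOdometer_of_not_exists h]
    simp_all

lemma shiftTwo_dyadicOdometer_of_head_false {w : ℕ → Bool} (hw : w 0 = false) :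
    shiftTwo (dyadicOdometer w) = shiftTwo w := by
  have h : ∃ k, w k = false := ⟨0, hw⟩
  funext i
  simp [shiftTwo, dyadicOdometer_of_exists h, (Nat.find_eq_zero h).2 hw]

lemma shiftTwo_dyadicOdometer_of_head_true {w : ℕ → Bool} (hw : w 0 = true) :
    shiftTwo (dyadicOdometer w) = dyadicOdometer (shiftTwo w) := by
  by_cases h : ∃ k, shiftTwo w k = false
  · have h' : ∃ k, w k = false := ⟨_, h.choose_spec⟩
    have hfind : Nat.find h' = Nat.find h + 1 := Nat.find_comp_succ h' h (by simp [hw])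
    funext i
    rw [dyadicOdometer_of_exists h]
    show dyadicOdometer w (i + 1) = _
    rw [dyadicOdometer_of_exists h', hfind]
    simp only [Nat.add_lt_add_iff_right, Nat.add_right_cancel_iff]
    rfl
  · have h' : ¬∃ k, w k = false := by
      rintro ⟨_ | k, hk⟩
      exacts [by simp_all, h ⟨k, hk⟩]
    rw [dyadicOdometer_of_not_exists h, dyadicOdometer_of_not_exists h']
    rfl

theorem shiftTwo_semiconj_dyadicOdometer_sq :
    Function.Semiconj shiftTwo dyadicOdometer^[2] dyadicOdometer := by
  intro w
  cases hw : w 0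
  · rw [Function.iterate_succ_apply', Function.iterate_one,
      shiftTwo_dyadicOdometer_of_head_true (by simp [dyadicOdometer_apply_zero, hw]),
      shiftTwo_dyadicOdometer_of_head_false hw]
  · rw [Function.iterate_succ_apply', Function.iterate_one,
      shiftTwo_dyadicOdometer_of_head_false (by simp [dyadicOdometer_apply_zero, hw]),
      shiftTwo_dyadicOdometer_of_head_true hw]

theorem dyadic_odometer_shift_renormalization (m n : ℕ) (w : ℕ → Bool) :
    (dyadicOdometer)^[m] ((shiftTwo)^[n] w) =
      (shiftTwo)^[n] ((dyadicOdometer)^[m * 2 ^ n] w) := by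
  rw [mul_comm, Function.iterate_mul]
  exact ((shiftTwo_semiconj_dyadicOdometer_sq.iterate_left_pow n).iterate_right m w).symm
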